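/- Let I be a finite index set and let p, q : I → ℝ be nonnegative functions with Σ_i p_i = 1 and Σ_i q_i = 1. Then the maximum, over all nonnegative r : I → ℝ with Σ_i r_i = 1, of Σ_i (p_i q_i r_i)^{1/3} equals (Σ_i √(p_i q_i))^{2/3}, and (when Σ_i √(p_i q_i) > 0) it is attained at r_i = √(p_i q_i) / Σ_j √(p_j q_j). -/

import Mathlib

open Matrix BigOperators
open scoped ComplexOrder

/-- A density matrix: positive semidefinite with trace 1. -/
def IsDensityMatrix {d : Type*} [Fintype d] [DecidableEq d]
    (ρ : Matrix d d ℂ) : Prop :=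
  ρ.PosSemidef ∧ ρ.trace = 1

/-- The compatibility `C(ρA, ρB)`: the supremum, over all finite families of density
matrices `σ` and weight vectors `p`, `q` (nonnegative, summing to 1) with
`∑ i, p i • σ i = ρA` and `∑ i, q i • σ i = ρB`, of the Bhattacharyya overlap
`∑ i, √(p i * q i)`. -/
noncomputable def compat {d : Type*} [Fintype d] [DecidableEq d]
    (ρA ρB : Matrix d d ℂ) : ℝ :=
  sSup { c : ℝ | ∃ (m : ℕ) (σ : Fin m → Matrix d d ℂ) (p q : Fin m → ℝ),
    (∀ i, IsDensityMatrix (σ i)) ∧ (∀ i, 0 ≤ p i) ∧ (∀ i, 0 ≤ q i) ∧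
    ∑ i, p i = 1 ∧ ∑ i, q i = 1 ∧
    ∑ i, p i • σ i = ρA ∧ ∑ i, q i • σ i = ρB ∧
    c = ∑ i, Real.sqrt (p i * q i) }

open scoped Classical in
/-- The positive semidefinite square root of a positive semidefinite matrix
(junk value `0` on non-PSD matrices). -/
noncomputable def psdSqrt {d : Type*} [Fintype d] [DecidableEq d]
    (A : Matrix d d ℂ) : Matrix d d ℂ :=
  if h : A.PosSemidef then
    (h.1.eigenvectorUnitary : Matrix d d ℂ) * diagonal ((↑) ∘ Real.sqrt ∘ h.1.eigenvalues) *
      (star (h.1.eigenvectorUnitary : Matrix d d ℂ))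
  else 0

/-- The fidelity `F(ρA, ρB) = Tr √(√ρA ρB √ρA)`. -/
noncomputable def fidelity {d : Type*} [Fintype d] [DecidableEq d]
    (ρA ρB : Matrix d d ℂ) : ℝ :=
  (psdSqrt (psdSqrt ρA * ρB * psdSqrt ρA)).trace.re

/-- The pure-state density matrix `|ψ⟩⟨ψ|` associated to a vector `ψ`. -/
def pureState {d : Type*} [Fintype d] [DecidableEq d] (ψ : d → ℂ) : Matrix d d ℂ :=
  Matrix.vecMulVec ψ (star ψ)

/-!
Write `w i = p i * q i`. Hölder's inequality with exponents `1/2`, `1` and `1/3`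
(`2 + 1 = 3`) gives `∑ (w i * r i)^(1/3) ≤ (∑ √(w i))^(2/3) * (∑ r i)^(1/3)`, and equality
holds for `r` proportional to `√w`, where each term becomes `√(w i) / (∑ √w)^(1/3)`.
If `∑ √(w i) = 0`, every `r` has overlap `0`.
-/

open Finset Real

theorem sum_mul_rpow_one_third_le {ι : Type*} (s : Finset ι) {w r : ι → ℝ}
    (hw : ∀ i ∈ s, 0 ≤ w i) (hr : ∀ i ∈ s, 0 ≤ r i) :
    ∑ i ∈ s, (w i * r i) ^ ((1 : ℝ) / 3)
      ≤ (∑ i ∈ s, √(w i)) ^ ((2 : ℝ) / 3) * (∑ i ∈ s, r i) ^ ((1 : ℝ) / 3) := by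
  have hpqr : HolderTriple (1 / 2) 1 (1 / 3) := ⟨by norm_num, by norm_num, by norm_num⟩
  convert Lr_rpow_le_Lp_mul_Lq_of_nonneg s hpqr hw hr using 3 <;> norm_num [sqrt_eq_rpow]

theorem sum_mul_sqrt_div_sum_rpow_one_third {ι : Type*} (s : Finset ι) {w : ι → ℝ}
    (hw : ∀ i ∈ s, 0 ≤ w i) (hS : 0 < ∑ j ∈ s, √(w j)) :
    ∑ i ∈ s, (w i * (√(w i) / ∑ j ∈ s, √(w j))) ^ ((1 : ℝ) / 3)
      = (∑ i ∈ s, √(w i)) ^ ((2 : ℝ) / 3) := by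
  set S := ∑ j ∈ s, √(w j)
  have hterm : ∀ i ∈ s,
      (w i * (√(w i) / S)) ^ ((1 : ℝ) / 3) = √(w i) / S ^ ((1 : ℝ) / 3) := by
    intro i hi
    have hcube : w i * (√(w i) / S) = √(w i) ^ (3 : ℝ) / S := by
      rw [show (3 : ℝ) = (3 : ℕ) by norm_num, rpow_natCast, pow_succ, sq_sqrt (hw i hi),
        mul_div_assoc]
    rw [hcube, div_rpow (by positivity) hS.le, ← rpow_mul (sqrt_nonneg _)]
    norm_num
  rw [sum_congr rfl hterm, ← sum_div, ← rpow_one_sub' hS.le (by norm_num)]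
  norm_num

theorem threeway_overlap_isGreatest_general {I : Type*} [Fintype I]
    (p q : I → ℝ) (hp : ∀ i, 0 ≤ p i) (hq : ∀ i, 0 ≤ q i)
    (hp1 : ∑ i, p i = 1) :
    IsGreatest { s : ℝ | ∃ r : I → ℝ, (∀ i, 0 ≤ r i) ∧ ∑ i, r i = 1 ∧
        s = ∑ i, (p i * q i * r i) ^ ((1 : ℝ) / 3) }
      ((∑ i, Real.sqrt (p i * q i)) ^ ((2 : ℝ) / 3)) ∧
    (0 < ∑ i, Real.sqrt (p i * q i) →
      ∑ i, (p i * q i * (Real.sqrt (p i * q i) / ∑ j, Real.sqrt (p j * q j)))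
          ^ ((1 : ℝ) / 3)
        = (∑ i, Real.sqrt (p i * q i)) ^ ((2 : ℝ) / 3)) := by
  have hw : ∀ i ∈ univ, 0 ≤ p i * q i := fun i _ => mul_nonneg (hp i) (hq i)
  set S := ∑ i, √(p i * q i)
  have bound : ∀ r : I → ℝ, (∀ i, 0 ≤ r i) → ∑ i, r i = 1 →
      ∑ i, (p i * q i * r i) ^ ((1 : ℝ) / 3) ≤ S ^ ((2 : ℝ) / 3) := fun r hr hr1 => by
    simpa [hr1] using sum_mul_rpow_one_third_le univ hw fun i _ => hr i
  have attained : 0 < S → ∑ i, (p i * q i * (√(p i * q i) / S)) ^ ((1 : ℝ) / 3)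
      = S ^ ((2 : ℝ) / 3) := sum_mul_sqrt_div_sum_rpow_one_third univ hw
  refine ⟨⟨?_, fun _ ⟨r, hr, hr1, hs⟩ => hs ▸ bound r hr hr1⟩, attained⟩
  rcases (sum_nonneg fun i _ => sqrt_nonneg (p i * q i) : 0 ≤ S).eq_or_lt with hS | hS
  · refine ⟨p, hp, hp1, le_antisymm ?_ (bound p hp hp1)⟩
    rw [show S = 0 from hS.symm, zero_rpow (by norm_num)]
    exact sum_nonneg fun i _ => rpow_nonneg (mul_nonneg (hw i (mem_univ i)) (hp i)) _
  · refine ⟨fun i => √(p i * q i) / S, fun i => by positivity, ?_, (attained hS).symm⟩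
    rw [← sum_div, div_self hS.ne']

/-- For probability distributions `p`, `q`, the maximum over probability
distributions `r` of the three-way overlap `∑ i, (p i * q i * r i)^(1/3)` equals
`(∑ i, √(p i * q i))^(2/3)`, and (when `∑ i, √(p i * q i) > 0`) it is attained at
`r i = √(p i * q i) / ∑ j, √(p j * q j)`. -/
theorem threeway_overlap_isGreatest {I : Type*} [Fintype I]
    (p q : I → ℝ) (hp : ∀ i, 0 ≤ p i) (hq : ∀ i, 0 ≤ q i)
    (hp1 : ∑ i, p i = 1) (hq1 : ∑ i, q i = 1) :
    IsGreatest { s : ℝ | ∃ r : I → ℝ, (∀ i, 0 ≤ r i) ∧ ∑ i, r i = 1 ∧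
        s = ∑ i, (p i * q i * r i) ^ ((1 : ℝ) / 3) }
      ((∑ i, Real.sqrt (p i * q i)) ^ ((2 : ℝ) / 3)) ∧
    (0 < ∑ i, Real.sqrt (p i * q i) →
      ∑ i, (p i * q i * (Real.sqrt (p i * q i) / ∑ j, Real.sqrt (p j * q j)))
          ^ ((1 : ℝ) / 3)
        = (∑ i, Real.sqrt (p i * q i)) ^ ((2 : ℝ) / 3)) :=
  threeway_overlap_isGreatest_general p q hp hq hp1
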